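/- Let y₁, y₂ ∈ ℝ and let E(θ) = ½((y₁ − θ²)² + (y₂ − θ)²). Suppose E has exactly two local minimum points θ₁ and θ₂ with θ₁ ≠ θ₂, and let α₁ and α₂ be their respective RE constants (values in [0,∞]). If α₁ > α₂ then θ₁ is a global minimum point of E, i.e. E(θ₁) ≤ E(θ) for all θ ∈ ℝ; and if α₂ > α₁ then θ₂ is a global minimum point of E. -/

import Mathlib

open scoped ENNReal

/-- The quartic least-squares objective `E(θ) = ½((y₁ − θ²)² + (y₂ − θ)²)`. -/
noncomputable def quarticE (y₁ y₂ : ℝ) (θ : ℝ) : ℝ :=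
  (1 / 2) * ((y₁ - θ ^ 2) ^ 2 + (y₂ - θ) ^ 2)

/-- The `α`-expanded quartic objective at the point `θs`:
`E_α(θ) = ½((ŷ₁ − θ²)² + (ŷ₂ − θ)²)` with `ŷ₁ = y₁ + α(y₁ − θs²)`, `ŷ₂ = y₂ + α(y₂ − θs)`. -/
noncomputable def quarticEexp (y₁ y₂ θs α : ℝ) (θ : ℝ) : ℝ :=
  (1 / 2) * (((y₁ + α * (y₁ - θs ^ 2)) - θ ^ 2) ^ 2 + ((y₂ + α * (y₂ - θs)) - θ) ^ 2)

/-- The RE constant of `θs`: `sup {α ≥ 0 : θs is a local minimum point of E_α}`,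
as an element of `[0, ∞]`. -/
noncomputable def reConst (y₁ y₂ θs : ℝ) : ℝ≥0∞ :=
  sSup (ENNReal.ofReal '' {α : ℝ | 0 ≤ α ∧ IsLocalMin (quarticEexp y₁ y₂ θs α) θs})

/-!
At a critical point `θs` of `E`,
`E_α(θ) - E_α(θs) = ½ (θ - θs)² ((θ + θs)² + 1 - 2 (1 + α) (y₁ - θs²))`,
so `θs` remains a local minimum of `E_α` while `2 (1 + α) (y₁ - θs²) < 4 θs² + 1` and stops being
one beyond. The RE constant is therefore `∞` if `y₁ ≤ θs²` and `(4 θs² + 1) / (2 (y₁ - θs²)) - 1`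
otherwise, and a larger RE constant forces a larger `θs²`. The same expansion at two critical
points gives `E(θ₂) - E(θ₁) = ½ (θ₂ - θ₁)² (θ₁² - θ₂²)`. Finally `E` is coercive, so it has a
global minimum; that is a local minimum, hence `θ₁` or `θ₂`, and it is the one with larger `θ²`.
-/

open Filter Topology

theorem forall_le_of_isLocalMin_imp {X β : Type*} [TopologicalSpace X] [Preorder β]
    {f : X → β} {a b : X} (hex : ∃ x, ∀ y, f x ≤ f y)
    (honly : ∀ x, IsLocalMin f x → x = a ∨ x = b) (hab : f a ≤ f b) :
    ∀ y, f a ≤ f y := by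
  obtain ⟨x, hx⟩ := hex
  rcases honly x (Eventually.of_forall hx) with rfl | rfl
  · exact hx
  · exact fun y => hab.trans (hx y)

theorem isLocalMin_of_sub_eq_sq_mul {f g : ℝ → ℝ} {x₀ : ℝ}
    (hfg : ∀ x, f x - f x₀ = (x - x₀) ^ 2 * g x) (hg : ContinuousAt g x₀) (hpos : 0 < g x₀) :
    IsLocalMin f x₀ := by
  filter_upwards [hg.eventually_const_lt hpos] with x hx
  nlinarith [hfg x, sq_nonneg (x - x₀)]

theorem not_isLocalMin_of_sub_eq_sq_mul {f g : ℝ → ℝ} {x₀ : ℝ}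
    (hfg : ∀ x, f x - f x₀ = (x - x₀) ^ 2 * g x) (hg : ContinuousAt g x₀) (hneg : g x₀ < 0) :
    ¬ IsLocalMin f x₀ := by
  intro hmin
  have hlt : ∀ᶠ x in 𝓝[≠] x₀, f x < f x₀ := by
    filter_upwards [nhdsWithin_le_nhds (hg.eventually_lt_const hneg), self_mem_nhdsWithin]
      with x hx hne
    have : 0 < (x - x₀) ^ 2 := by positivity [sub_ne_zero.mpr hne]
    nlinarith [hfg x]
  obtain ⟨x, hle, hlt⟩ := ((hmin.filter_mono nhdsWithin_le_nhds).and hlt).exists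
  exact hle.not_gt hlt

theorem sSup_ofReal_image_eq {S : Set ℝ} {A : ℝ≥0∞}
    (hlo : ∀ α, 0 ≤ α → ENNReal.ofReal α < A → α ∈ S) (hhi : ∀ α ∈ S, ENNReal.ofReal α ≤ A) :
    sSup (ENNReal.ofReal '' S) = A := by
  refine le_antisymm (sSup_le (by simpa using hhi)) (le_of_forall_lt fun c hc => ?_)
  obtain ⟨d, hcd, hdA⟩ := exists_between hc
  have hd : d ≠ ⊤ := hdA.ne_top
  refine lt_sSup_iff.mpr ⟨d, ⟨d.toReal, hlo _ ENNReal.toReal_nonneg ?_, ?_⟩, hcd⟩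
  · rwa [ENNReal.ofReal_toReal hd]
  · exact ENNReal.ofReal_toReal hd

theorem hasDerivAt_quarticE (y₁ y₂ θ : ℝ) :
    HasDerivAt (quarticE y₁ y₂) (-(2 * θ * (y₁ - θ ^ 2) + (y₂ - θ))) θ := by
  refine (((((hasDerivAt_id' θ).fun_pow 2).const_sub y₁).fun_pow 2).fun_add
    (((hasDerivAt_id' θ).const_sub y₂).fun_pow 2) |>.const_mul (1 / 2 : ℝ)).congr_deriv ?_
  push_cast
  ring

theorem quarticE_critical_of_isLocalMin {y₁ y₂ θs : ℝ} (h : IsLocalMin (quarticE y₁ y₂) θs) :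
    2 * θs * (y₁ - θs ^ 2) + (y₂ - θs) = 0 :=
  neg_eq_zero.mp (h.hasDerivAt_eq_zero (hasDerivAt_quarticE y₁ y₂ θs))

theorem quarticE_exists_forall_le (y₁ y₂ : ℝ) :
    ∃ θ₀, ∀ θ, quarticE y₁ y₂ θ₀ ≤ quarticE y₁ y₂ θ := by
  refine (by unfold quarticE; fun_prop : Continuous (quarticE y₁ y₂)).exists_forall_le ?_
  refine tendsto_atTop_mono (fun θ => ?_) <| tendsto_atTop_add_const_right _ (-(y₂ ^ 2 / 2)) <|
    ((tendsto_pow_atTop two_ne_zero).comp tendsto_norm_cocompact_atTop).atTop_div_const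
      (by norm_num : (0 : ℝ) < 4)
  simp only [Function.comp_apply, Real.norm_eq_abs, sq_abs, quarticE]
  nlinarith [sq_nonneg (θ - 2 * y₂), sq_nonneg (y₁ - θ ^ 2)]

theorem quarticEexp_zero (y₁ y₂ θs : ℝ) : quarticEexp y₁ y₂ θs 0 = quarticE y₁ y₂ := by
  funext θ
  simp [quarticEexp, quarticE]

section CriticalPoint

variable {y₁ y₂ θs : ℝ} (hcrit : 2 * θs * (y₁ - θs ^ 2) + (y₂ - θs) = 0)
include hcrit

theorem quarticEexp_sub_eq (α θ : ℝ) :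
    quarticEexp y₁ y₂ θs α θ - quarticEexp y₁ y₂ θs α θs =
      (θ - θs) ^ 2 * (((θ + θs) ^ 2 + 1 - 2 * (1 + α) * (y₁ - θs ^ 2)) / 2) := by
  unfold quarticEexp
  linear_combination (-(1 + α) * (θ - θs)) * hcrit

theorem isLocalMin_quarticEexp {α : ℝ} (h : 2 * (1 + α) * (y₁ - θs ^ 2) < 4 * θs ^ 2 + 1) :
    IsLocalMin (quarticEexp y₁ y₂ θs α) θs :=
  isLocalMin_of_sub_eq_sq_mul (quarticEexp_sub_eq hcrit α) (by fun_prop) (by nlinarith)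

theorem not_isLocalMin_quarticEexp {α : ℝ} (h : 4 * θs ^ 2 + 1 < 2 * (1 + α) * (y₁ - θs ^ 2)) :
    ¬ IsLocalMin (quarticEexp y₁ y₂ θs α) θs :=
  not_isLocalMin_of_sub_eq_sq_mul (quarticEexp_sub_eq hcrit α) (by fun_prop) (by nlinarith)

theorem reConst_eq_top (hr : y₁ - θs ^ 2 ≤ 0) : reConst y₁ y₂ θs = ⊤ :=
  sSup_ofReal_image_eq
    (fun _ hα _ => ⟨hα, isLocalMin_quarticEexp hcrit (by nlinarith)⟩) (fun _ _ => le_top)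

theorem reConst_eq_ofReal (hr : 0 < y₁ - θs ^ 2) :
    reConst y₁ y₂ θs = ENNReal.ofReal ((4 * θs ^ 2 + 1) / (2 * (y₁ - θs ^ 2)) - 1) := by
  have hc : (4 * θs ^ 2 + 1) / (2 * (y₁ - θs ^ 2)) * (2 * (y₁ - θs ^ 2)) = 4 * θs ^ 2 + 1 :=
    div_mul_cancel₀ _ (by positivity)
  refine sSup_ofReal_image_eq (fun α hα hlt => ⟨hα, isLocalMin_quarticEexp hcrit ?_⟩) ?_
  · nlinarith [(ENNReal.ofReal_lt_ofReal_iff'.mp hlt).1]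
  · rintro α ⟨-, hmin⟩
    exact ENNReal.ofReal_le_ofReal <| le_of_not_gt fun hlt =>
      not_isLocalMin_quarticEexp hcrit (by nlinarith) hmin

end CriticalPoint

theorem sq_lt_sq_of_reConst_lt {y₁ y₂ θ₁ θ₂ : ℝ}
    (hc₁ : 2 * θ₁ * (y₁ - θ₁ ^ 2) + (y₂ - θ₁) = 0) (hc₂ : 2 * θ₂ * (y₁ - θ₂ ^ 2) + (y₂ - θ₂) = 0)
    (h : reConst y₁ y₂ θ₂ < reConst y₁ y₂ θ₁) : θ₂ ^ 2 < θ₁ ^ 2 := by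
  rcases le_or_gt (y₁ - θ₂ ^ 2) 0 with hr₂ | hr₂
  · exact absurd h (by rw [reConst_eq_top hc₂ hr₂]; exact not_top_lt)
  rcases le_or_gt (y₁ - θ₁ ^ 2) 0 with hr₁ | hr₁
  · linarith
  rw [reConst_eq_ofReal hc₁ hr₁, reConst_eq_ofReal hc₂ hr₂, ENNReal.ofReal_lt_ofReal_iff',
    sub_lt_sub_iff_right, div_lt_div_iff₀ (by positivity) (by positivity)] at h
  -- with `4 θ² + 1 = 4 y₁ + 1 - 4 (y₁ - θ²)`, `h.1` says `(4 y₁ + 1) (θ₁² - θ₂²) > 0`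
  nlinarith [h.1]

theorem quarticE_sub_quarticE {y₁ y₂ θ₁ θ₂ : ℝ}
    (hc₁ : 2 * θ₁ * (y₁ - θ₁ ^ 2) + (y₂ - θ₁) = 0) (hc₂ : 2 * θ₂ * (y₁ - θ₂ ^ 2) + (y₂ - θ₂) = 0) :
    quarticE y₁ y₂ θ₂ - quarticE y₁ y₂ θ₁ = (θ₂ - θ₁) ^ 2 * (θ₁ ^ 2 - θ₂ ^ 2) / 2 := by
  have h₁ := quarticEexp_sub_eq hc₁ 0 θ₂
  have h₂ := quarticEexp_sub_eq hc₂ 0 θ₁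
  rw [quarticEexp_zero] at h₁ h₂
  linear_combination (h₁ - h₂) / 2

theorem forall_quarticE_le_of_reConst_lt {y₁ y₂ θ₁ θ₂ : ℝ}
    (hmin₁ : IsLocalMin (quarticE y₁ y₂) θ₁) (hmin₂ : IsLocalMin (quarticE y₁ y₂) θ₂)
    (honly : ∀ θ : ℝ, IsLocalMin (quarticE y₁ y₂) θ → θ = θ₁ ∨ θ = θ₂)
    (h : reConst y₁ y₂ θ₂ < reConst y₁ y₂ θ₁) :
    ∀ θ : ℝ, quarticE y₁ y₂ θ₁ ≤ quarticE y₁ y₂ θ := by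
  have hc₁ := quarticE_critical_of_isLocalMin hmin₁
  have hc₂ := quarticE_critical_of_isLocalMin hmin₂
  refine forall_le_of_isLocalMin_imp (quarticE_exists_forall_le y₁ y₂) honly ?_
  nlinarith [quarticE_sub_quarticE hc₁ hc₂, sq_lt_sq_of_reConst_lt hc₁ hc₂ h, sq_nonneg (θ₂ - θ₁)]

theorem stmt_0_general (y₁ y₂ θ₁ θ₂ : ℝ)
    (hmin₁ : IsLocalMin (quarticE y₁ y₂) θ₁)
    (hmin₂ : IsLocalMin (quarticE y₁ y₂) θ₂)
    (honly : ∀ θ : ℝ, IsLocalMin (quarticE y₁ y₂) θ → θ = θ₁ ∨ θ = θ₂) :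
    (reConst y₁ y₂ θ₁ > reConst y₁ y₂ θ₂ →
      ∀ θ : ℝ, quarticE y₁ y₂ θ₁ ≤ quarticE y₁ y₂ θ) ∧
    (reConst y₁ y₂ θ₂ > reConst y₁ y₂ θ₁ →
      ∀ θ : ℝ, quarticE y₁ y₂ θ₂ ≤ quarticE y₁ y₂ θ) :=
  ⟨forall_quarticE_le_of_reConst_lt hmin₁ hmin₂ honly,
    forall_quarticE_le_of_reConst_lt hmin₂ hmin₁ fun θ h => (honly θ h).symm⟩

theorem stmt_0 (y₁ y₂ θ₁ θ₂ : ℝ) (hne : θ₁ ≠ θ₂)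
    (hmin₁ : IsLocalMin (quarticE y₁ y₂) θ₁)
    (hmin₂ : IsLocalMin (quarticE y₁ y₂) θ₂)
    (honly : ∀ θ : ℝ, IsLocalMin (quarticE y₁ y₂) θ → θ = θ₁ ∨ θ = θ₂) :
    (reConst y₁ y₂ θ₁ > reConst y₁ y₂ θ₂ →
      ∀ θ : ℝ, quarticE y₁ y₂ θ₁ ≤ quarticE y₁ y₂ θ) ∧
    (reConst y₁ y₂ θ₂ > reConst y₁ y₂ θ₁ →
      ∀ θ : ℝ, quarticE y₁ y₂ θ₂ ≤ quarticE y₁ y₂ θ) :=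
  stmt_0_general y₁ y₂ θ₁ θ₂ hmin₁ hmin₂ honly
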